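/- arXiv:2208.12595 — 6 statements merged into one kernel-verified Lean document; each statement's English description precedes it below -/
import Mathlib

section
/- Let d ≥ 1, let v ⊆ Fin d be nonempty, let c ∈ ℝ, and define the scaled unanimity game val^{(v)}(u) := c if v ⊆ u and val^{(v)}(u) := 0 otherwise. Then the Shapley value of player j for val^{(v)} equals c/|v| if j ∈ v, and equals 0 if j ∉ v. -/
/-!
A player outside `v` is null: adding it never changes whether `v` is contained, so every
marginal contribution vanishes. For `j ∈ v` and `j ∉ u`, the marginal contribution at `u` is `c`
exactly when `v.erase j ⊆ u`, so the Shapley value is `c / d` times the sum of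
`(choose (d - 1) #u)⁻¹` over the interval `[v.erase j, univ.erase j]`. Grouping by cardinality,
`choose m k / choose (m + s) (k + s) = choose (k + s) s / choose (m + s) s` and the hockey-stick
identity evaluate that sum to `d / #v`.
-/

open Finset

noncomputable def shapley {d : ℕ} (val : Finset (Fin d) → ℝ) (j : Fin d) : ℝ :=
  (1 / (d : ℝ)) * ∑ u ∈ (Finset.univ.erase j).powerset,
    ((Nat.choose (d - 1) u.card : ℝ))⁻¹ * (val (insert j u) - val u)

theorem sum_choose_div_choose_add (m s : ℕ) :
    ∑ k ∈ range (m + 1), (m.choose k : ℝ) / (m + s).choose (k + s) = (m + s + 1) / (s + 1) := by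
  have hpos : (0 : ℝ) < (m + s).choose s := by exact_mod_cast Nat.choose_pos (by omega)
  have term : ∀ k ∈ range (m + 1),
      (m.choose k : ℝ) / (m + s).choose (k + s) = (k + s).choose s / (m + s).choose s := by
    intro k hk
    have hk : k + s ≤ m + s := by simp only [mem_range] at hk; omega
    have hmul :
        ((m + s).choose (k + s) * (k + s).choose s : ℝ) = (m + s).choose s * m.choose k := by
      have := Nat.choose_mul (n := m + s) (Nat.le_add_left s k)
      simp only [Nat.add_sub_cancel] at this
      exact_mod_cast this
    have : (0 : ℝ) < (m + s).choose (k + s) := by exact_mod_cast Nat.choose_pos hk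
    rw [div_eq_div_iff this.ne' hpos.ne']
    linarith
  have hmul : ((m + s + 1) * (m + s).choose s : ℝ) = (m + s + 1).choose (s + 1) * (s + 1) := by
    exact_mod_cast Nat.add_one_mul_choose_eq (m + s) s
  rw [sum_congr rfl term, ← sum_div, ← Nat.cast_sum, Nat.sum_range_add_choose]
  field_simp
  linarith

theorem sum_Icc_inv_choose_card {α : Type*} [DecidableEq α] {t S : Finset α} (h : t ⊆ S) :
    ∑ u ∈ Icc t S, ((#S).choose #u : ℝ)⁻¹ = (#S + 1) / (#t + 1) := by
  have hdisj : ∀ w ∈ (S \ t).powerset, Disjoint t w := fun w hw =>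
    disjoint_of_subset_right (mem_powerset.mp hw) disjoint_sdiff
  have hinj : Set.InjOn (t ∪ ·) (S \ t).powerset := fun w hw w' hw' hww' => by
    rw [← union_sdiff_cancel_left (hdisj w hw), ← union_sdiff_cancel_left (hdisj w' hw')]
    exact congrArg (· \ t) hww'
  rw [Icc_eq_image_powerset h, sum_image hinj,
    sum_congr rfl fun w hw => by rw [card_union_of_disjoint (hdisj w hw), add_comm],
    sum_powerset_apply_card (fun k => ((#S).choose (k + #t) : ℝ)⁻¹),
    ← card_sdiff_add_card_eq_card h]
  simp only [nsmul_eq_mul, ← div_eq_mul_inv]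
  exact_mod_cast sum_choose_div_choose_add _ _

theorem shapley_eq_zero_of_null {d : ℕ} {val : Finset (Fin d) → ℝ} {j : Fin d}
    (h : ∀ u, j ∉ u → val (insert j u) = val u) : shapley val j = 0 := by
  refine mul_eq_zero_of_right _ (sum_eq_zero fun u hu => ?_)
  rw [h u fun hj => by simpa using mem_powerset.mp hu hj, sub_self, mul_zero]

theorem shapley_eq_of_marginal_eq_ite {d : ℕ} {val : Finset (Fin d) → ℝ} {j : Fin d}
    {t : Finset (Fin d)} (hjt : j ∉ t) (c : ℝ)
    (h : ∀ u, j ∉ u → val (insert j u) - val u = if t ⊆ u then c else 0) :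
    shapley val j = c / (#t + 1) := by
  have htS : t ⊆ univ.erase j := fun x hx =>
    mem_erase.mpr ⟨by rintro rfl; exact hjt hx, mem_univ x⟩
  have hS : #(univ.erase j) = d - 1 := by simp [card_erase_of_mem]
  have hd : ((d - 1 : ℕ) : ℝ) + 1 = d := by rw [Nat.cast_sub j.pos]; ring
  rw [shapley, sum_congr rfl fun u hu => by rw [h u fun hj => by simpa using mem_powerset.mp hu hj]]
  simp_rw [mul_ite, mul_zero]
  rw [← sum_filter, ← Icc_eq_filter_powerset, ← sum_mul, ← hS, sum_Icc_inv_choose_card htS, hS,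
    hd]
  have : (d : ℝ) ≠ 0 := by exact_mod_cast j.pos.ne'
  field_simp

theorem shapley_unanimity_general {d : ℕ} (v : Finset (Fin d))
    (c : ℝ) (val : Finset (Fin d) → ℝ)
    (hval : ∀ u : Finset (Fin d), val u = if v ⊆ u then c else 0) (j : Fin d) :
    (j ∈ v → shapley val j = c / v.card) ∧ (j ∉ v → shapley val j = 0) := by
  refine ⟨fun hj => ?_, fun hj => ?_⟩
  · rw [shapley_eq_of_marginal_eq_ite (notMem_erase j v) c fun u hju => by
      rw [hval (insert j u), hval u, if_neg (show ¬v ⊆ u from fun hvu => hju (hvu hj)), sub_zero]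
      simp only [subset_insert_iff]]
    rw_mod_cast [card_erase_add_one hj]
  · exact shapley_eq_zero_of_null fun u _ => by simp only [hval, subset_insert_iff_of_notMem hj]

/-- Shapley values of the scaled unanimity game on a nonempty coalition `v`:
`c / |v|` for members of `v`, `0` for non-members. -/
theorem shapley_unanimity {d : ℕ} (hd : 1 ≤ d) (v : Finset (Fin d)) (hv : v.Nonempty)
    (c : ℝ) (val : Finset (Fin d) → ℝ)
    (hval : ∀ u : Finset (Fin d), val u = if v ⊆ u then c else 0) (j : Fin d) :
    (j ∈ v → shapley val j = c / v.card) ∧ (j ∉ v → shapley val j = 0) :=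
  shapley_unanimity_general v c val hval j
end

section
/- (Efficiency) Let d ≥ 1 and let val : Finset (Fin d) → ℝ satisfy val(∅) = 0. Then the Shapley values sum to the grand coalition value: Σ_{j ∈ Fin d} φ_j(val) = val(Fin d). -/
open Finset

lemma key_nat {d s : ℕ} (h1 : 1 ≤ s) (h2 : s + 1 ≤ d) :
    s * (d-1).choose s = (d - s) * (d-1).choose (s-1) := by
  obtain ⟨e, rfl⟩ : ∃ e, d = e + 1 := ⟨d - 1, by omega⟩
  obtain ⟨t, rfl⟩ : ∃ t, s = t + 1 := ⟨s - 1, by omega⟩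
  simp only [Nat.add_sub_cancel]
  have h := Nat.choose_succ_right_eq e t
  have : e + 1 - (t + 1) = e - t := by omega
  rw [this, mul_comm, h, mul_comm]

/-- Efficiency: the Shapley values sum to the value of the grand coalition. -/
theorem shapley_efficiency {d : ℕ} (hd : 1 ≤ d) (val : Finset (Fin d) → ℝ)
    (h0 : val ∅ = 0) :
    ∑ j : Fin d, shapley val j = val Finset.univ := by
  classical
  have hd0 : (d : ℝ) ≠ 0 := by
    exact Nat.cast_ne_zero.mpr (by omega)
  set c : ℕ → ℝ := fun k => ((Nat.choose (d - 1) k : ℝ))⁻¹ with hc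
  simp only [shapley]
  rw [← Finset.mul_sum]
  have hT : (∑ j : Fin d, ∑ u ∈ (Finset.univ.erase j).powerset,
      c u.card * (val (insert j u) - val u)) = d * val Finset.univ := by
    have split : ∀ j : Fin d, ∑ u ∈ (Finset.univ.erase j).powerset,
        c u.card * (val (insert j u) - val u)
        = (∑ u ∈ (Finset.univ.erase j).powerset, c u.card * val (insert j u))
          - ∑ u ∈ (Finset.univ.erase j).powerset, c u.card * val u := by
      intro j
      rw [← Finset.sum_sub_distrib]
      congr 1; ext u; ring
    simp only [split, Finset.sum_sub_distrib]
    -- Part A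
    have hA : (∑ j : Fin d, ∑ u ∈ (Finset.univ.erase j).powerset,
        c u.card * val (insert j u))
        = ∑ S ∈ (Finset.univ : Finset (Fin d)).powerset,
            (S.card : ℝ) * (c (S.card - 1) * val S) := by
      have step1 : ∀ j : Fin d, ∑ u ∈ (Finset.univ.erase j).powerset,
          c u.card * val (insert j u)
          = ∑ S ∈ (Finset.univ : Finset (Fin d)).powerset.filter (fun S => j ∈ S),
              c (S.card - 1) * val S := by
        intro j
        refine Finset.sum_bij' (fun u _ => insert j u) (fun S _ => S.erase j) ?_ ?_ ?_ ?_ ?_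
        · intro u hu
          simp only [Finset.mem_filter, Finset.mem_powerset]
          exact ⟨Finset.subset_univ _, Finset.mem_insert_self j u⟩
        · intro S hS
          simp only [Finset.mem_powerset]
          exact Finset.erase_subset_erase j (Finset.subset_univ S)
        · intro u hu
          simp only [Finset.mem_powerset] at hu
          have hj : j ∉ u := fun h => (Finset.mem_erase.mp (hu h)).1 rfl
          exact Finset.erase_insert hj
        · intro S hS
          simp only [Finset.mem_filter] at hS
          exact Finset.insert_erase hS.2
        · intro u hu
          simp only [Finset.mem_powerset] at hu
          have hj : j ∉ u := fun h => (Finset.mem_erase.mp (hu h)).1 rfl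
          rw [Finset.card_insert_of_notMem hj]
          simp
      simp only [step1]
      rw [Finset.sum_comm' (s' := fun S => S) (t' := (Finset.univ : Finset (Fin d)).powerset)]
      · refine Finset.sum_congr rfl fun S _ => ?_
        rw [Finset.sum_const, nsmul_eq_mul]
      · intro j S
        simp [Finset.mem_filter]
    -- Part B
    have hB : (∑ j : Fin d, ∑ u ∈ (Finset.univ.erase j).powerset, c u.card * val u)
        = ∑ u ∈ (Finset.univ : Finset (Fin d)).powerset,
            ((d : ℝ) - u.card) * (c u.card * val u) := by
      rw [Finset.sum_comm' (s' := fun u => uᶜ) (t' := (Finset.univ : Finset (Fin d)).powerset)]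
      · refine Finset.sum_congr rfl fun u hu => ?_
        rw [Finset.sum_const, nsmul_eq_mul, Finset.card_compl, Fintype.card_fin]
        have : u.card ≤ d := by
          simpa using Finset.card_le_card (Finset.subset_univ u)
        rw [Nat.cast_sub this]
      · intro j u
        simp only [Finset.mem_univ, true_and, Finset.mem_powerset, Finset.mem_compl,
          Finset.subset_univ, and_true]
        constructor
        · intro h hj
          exact (Finset.mem_erase.mp (h hj)).1 rfl
        · intro h
          intro x hx
          simp only [Finset.mem_erase, Finset.mem_univ, and_true]
          rintro rfl; exact h hx
    rw [hA, hB, ← Finset.sum_sub_distrib]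
    -- combine: single sum over powerset
    rw [Finset.sum_eq_single_of_mem (Finset.univ : Finset (Fin d))
      (Finset.mem_powerset_self _)]
    · rw [Finset.card_univ, Fintype.card_fin]
      have : c (d - 1) = 1 := by simp [hc]
      rw [this]
      ring
    · intro S hS hSne
      simp only [Finset.mem_powerset] at hS
      have hcard : S.card < d := by
        have h1 : S.card ≤ d := by simpa using Finset.card_le_card hS
        rcases lt_or_eq_of_le h1 with h | h
        · exact h
        · exfalso
          apply hSne
          apply Finset.eq_univ_of_card
          simp [h]
      rcases Nat.eq_zero_or_pos S.card with h0' | h1'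
      · have : S = ∅ := Finset.card_eq_zero.mp h0'
        subst this
        simp [h0]
      · -- coefficient is zero
        have hz : (S.card : ℝ) * c (S.card - 1) - ((d : ℝ) - S.card) * c S.card = 0 := by
          set s := S.card
          have hb1 : (d - 1).choose (s - 1) ≠ 0 :=
            (Nat.choose_pos (by omega)).ne'
          have hb2 : (d - 1).choose s ≠ 0 :=
            (Nat.choose_pos (by omega)).ne'
          have hb1' : ((d - 1).choose (s - 1) : ℝ) ≠ 0 := Nat.cast_ne_zero.mpr hb1
          have hb2' : ((d - 1).choose s : ℝ) ≠ 0 := Nat.cast_ne_zero.mpr hb2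
          have hkey : (s : ℝ) * (d - 1).choose s
              = ((d : ℝ) - s) * (d - 1).choose (s - 1) := by
            have := key_nat h1' (by omega : s + 1 ≤ d)
            have hcast : ((s * (d-1).choose s : ℕ) : ℝ)
                = (((d - s) * (d-1).choose (s-1) : ℕ) : ℝ) := by rw [this]
            push_cast [Nat.cast_sub (le_of_lt hcard)] at hcast
            linarith [hcast]
          simp only [hc]
          field_simp
          linarith [hkey]
        calc (S.card : ℝ) * (c (S.card - 1) * val S) - ((d:ℝ) - S.card) * (c S.card * val S)
            = ((S.card : ℝ) * c (S.card - 1) - ((d:ℝ) - S.card) * c S.card) * val S := by ring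
          _ = 0 := by rw [hz]; ring
  rw [hT]
  field_simp
end

section
/- (Symmetry) Let d ≥ 1, let val : Finset (Fin d) → ℝ satisfy val(∅) = 0, and let i, j ∈ Fin d with i ≠ j. If val(u ∪ {i}) = val(u ∪ {j}) for every u ⊆ (Fin d) \ {i, j}, then φ_i(val) = φ_j(val). -/
open Finset

lemma mem_image_swap {d : ℕ} (i j : Fin d) (u : Finset (Fin d)) (x : Fin d) :
    x ∈ u.image (Equiv.swap i j) ↔ Equiv.swap i j x ∈ u := by
  constructor
  · rintro h
    rw [Finset.mem_image] at h
    obtain ⟨y, hy, rfl⟩ := h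
    simpa using hy
  · intro h
    rw [Finset.mem_image]
    exact ⟨_, h, by simp⟩

lemma image_swap_swap {d : ℕ} (i j : Fin d) (u : Finset (Fin d)) :
    (u.image (Equiv.swap i j)).image (Equiv.swap i j) = u := by
  ext x
  simp [mem_image_swap]

/-- Symmetry: if `i` and `j` contribute equally to every coalition avoiding both,
then they receive equal Shapley values. -/
theorem shapley_symmetry {d : ℕ} (hd : 1 ≤ d) (val : Finset (Fin d) → ℝ)
    (h0 : val ∅ = 0) (i j : Fin d) (hij : i ≠ j)
    (hsym : ∀ u : Finset (Fin d), u ⊆ Finset.univ \ {i, j} →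
      val (insert i u) = val (insert j u)) :
    shapley val i = shapley val j := by
  have key : ∀ u : Finset (Fin d), u ∈ (Finset.univ.erase i).powerset →
      val (insert i u) - val u =
      val (insert j (u.image (Equiv.swap i j))) - val (u.image (Equiv.swap i j)) := by
    intro u hu
    rw [Finset.mem_powerset] at hu
    have hiu : i ∉ u := fun h => (Finset.mem_erase.mp (hu h)).1 rfl
    by_cases hju : j ∈ u
    · -- image = insert i (u.erase j)
      have himg : u.image (Equiv.swap i j) = insert i (u.erase j) := by
        ext x
        rw [mem_image_swap]
        rcases eq_or_ne x i with rfl | hxi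
        · simp [Equiv.swap_apply_left, hju]
        rcases eq_or_ne x j with rfl | hxj
        · simp [Equiv.swap_apply_right, hiu, hij.symm]
        · rw [Equiv.swap_apply_of_ne_of_ne hxi hxj]
          simp [hxi, hxj]
      have hsub : u.erase j ⊆ Finset.univ \ {i, j} := by
        intro x hx
        rw [Finset.mem_erase] at hx
        simp only [Finset.mem_sdiff, Finset.mem_univ, Finset.mem_insert, Finset.mem_singleton, true_and]
        push_neg
        exact ⟨fun h => absurd (h ▸ hx.2) hiu, hx.1⟩
      rw [himg]
      have h1 : insert j (insert i (u.erase j)) = insert i u := by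
        rw [Finset.insert_comm, Finset.insert_erase hju]
      have h2 : val (insert i (u.erase j)) = val (insert j (u.erase j)) := hsym _ hsub
      rw [h1, h2, Finset.insert_erase hju]
    · have himg : u.image (Equiv.swap i j) = u := by
        ext x
        rw [mem_image_swap]
        rcases eq_or_ne x i with rfl | hxi
        · rw [Equiv.swap_apply_left]; simp [hju, hiu]
        rcases eq_or_ne x j with rfl | hxj
        · rw [Equiv.swap_apply_right]; simp [hiu, hju]
        · rw [Equiv.swap_apply_of_ne_of_ne hxi hxj]
      have hsub : u ⊆ Finset.univ \ {i, j} := by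
        intro x hx
        simp only [Finset.mem_sdiff, Finset.mem_univ, Finset.mem_insert, Finset.mem_singleton, true_and]
        push_neg
        exact ⟨fun h => absurd (h ▸ hx) hiu, fun h => absurd (h ▸ hx) hju⟩
      rw [himg, hsym u hsub]
  unfold shapley
  congr 1
  apply Finset.sum_nbij' (fun u => u.image (Equiv.swap i j))
    (fun u => u.image (Equiv.swap i j))
  · intro u hu
    rw [Finset.mem_powerset] at hu ⊢
    intro x hx
    rw [mem_image_swap] at hx
    rw [Finset.mem_erase]
    refine ⟨?_, Finset.mem_univ _⟩
    rintro rfl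
    rw [Equiv.swap_apply_right] at hx
    exact (Finset.mem_erase.mp (hu hx)).1 rfl
  · intro u hu
    rw [Finset.mem_powerset] at hu ⊢
    intro x hx
    rw [mem_image_swap] at hx
    rw [Finset.mem_erase]
    refine ⟨?_, Finset.mem_univ _⟩
    rintro rfl
    rw [Equiv.swap_apply_left] at hx
    exact (Finset.mem_erase.mp (hu hx)).1 rfl
  · intro u _; exact image_swap_swap i j u
  · intro u _; exact image_swap_swap i j u
  · intro u hu
    rw [Finset.card_image_of_injective _ (Equiv.injective _), key u hu]
end

section
/- Let d ≥ 1, let μ_j (j ∈ Fin d) be probability measures on ℝ, let μ := ⊗_j μ_j be their product measure on (Fin d → ℝ), and let f : (Fin d → ℝ) → ℝ be bounded and measurable. For u ⊆ Fin d define the partial dependence function F_u(x) := ∫ f(x_u : z_{−u}) dμ(z) and the PDD components f_u := Σ_{v ⊆ u} (−1)^{|u|−|v|} F_v. Then for every x ∈ (Fin d → ℝ) and u ⊆ Fin d, the value function val_x(u) := ∫ f(x_u : z_{−u}) dμ(z) − ∫ f(z) dμ(z) satisfies val_x(u) = Σ_{v ⊆ u, v ≠ ∅} f_v(x). -/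
open MeasureTheory Finset

lemma pddNegOnePow {α : Type*} [DecidableEq α] (x : Finset α) :
    ∑ m ∈ x.powerset, (-1:ℝ)^m.card = if x = ∅ then 1 else 0 := by
  have h := Finset.sum_powerset_neg_one_pow_card (x := x)
  have h2 := congrArg (Int.cast : ℤ → ℝ) h
  push_cast at h2
  simpa [apply_ite (Int.cast : ℤ → ℝ)] using h2

lemma pddInnerSum {α : Type*} [DecidableEq α] (u w : Finset α) (hw : w ⊆ u) :
    ∑ v ∈ u.powerset, (if w ⊆ v then (-1:ℝ)^(v.card - w.card) else 0)
      = if w = u then 1 else 0 := by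
  rw [Finset.sum_ite, Finset.sum_const, smul_zero, add_zero]
  have : ∑ v ∈ u.powerset.filter (w ⊆ ·), (-1:ℝ)^(v.card - w.card)
      = ∑ t ∈ (u \ w).powerset, (-1:ℝ)^t.card := by
    apply Finset.sum_nbij' (fun v => v \ w) (fun t => w ∪ t)
    · intro v hv
      simp only [mem_filter, mem_powerset] at hv ⊢
      exact sdiff_subset_sdiff hv.1 (Finset.Subset.refl w)
    · intro t ht
      simp only [mem_powerset] at ht
      simp only [mem_filter, mem_powerset]
      exact ⟨union_subset hw (ht.trans (sdiff_subset)), subset_union_left⟩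
    · intro v hv
      simp only [mem_filter, mem_powerset] at hv
      exact union_sdiff_of_subset hv.2
    · intro t ht
      simp only [mem_powerset] at ht
      rw [union_sdiff_cancel_left]
      exact disjoint_of_subset_right ht disjoint_sdiff
    · intro v hv
      simp only [mem_filter, mem_powerset] at hv
      rw [card_sdiff_of_subset hv.2]
  rw [this, pddNegOnePow]
  congr 1
  simp only [sdiff_eq_empty_iff_subset, eq_iff_iff]
  exact ⟨fun h => Finset.Subset.antisymm hw h, fun h => le_of_eq h.symm⟩

lemma aux_sum {α : Type*} [DecidableEq α] (u : Finset α) (F : Finset α → ℝ) :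
    ∑ v ∈ u.powerset, ∑ w ∈ v.powerset, (-1:ℝ)^(v.card - w.card) * F w = F u := by
  have key : ∀ v ∈ u.powerset, ∑ w ∈ v.powerset, (-1:ℝ)^(v.card - w.card) * F w
      = ∑ w ∈ u.powerset, if w ⊆ v then (-1:ℝ)^(v.card - w.card) * F w else 0 := by
    intro v hv
    rw [mem_powerset] at hv
    rw [← Finset.sum_filter]
    congr 1
    ext w
    simp only [mem_powerset, mem_filter]
    exact ⟨fun h => ⟨h.trans hv, h⟩, fun h => h.2⟩
  rw [Finset.sum_congr rfl key, Finset.sum_comm]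
  have : ∀ w ∈ u.powerset,
      (∑ v ∈ u.powerset, if w ⊆ v then (-1:ℝ)^(v.card - w.card) * F w else 0)
        = (if w = u then 1 else 0) * F w := by
    intro w hw
    rw [mem_powerset] at hw
    rw [← pddInnerSum u w hw, Finset.sum_mul]
    exact Finset.sum_congr rfl fun v _ => by split <;> simp
  rw [Finset.sum_congr rfl this]
  simp [ite_mul]


/-- Partial dependence function: `F_u(x) = ∫ f(x_u : z_{-u}) dμ(z)`, where the hybrid
point `(x_u : z_{-u})` takes coordinate `x j` for `j ∈ u` and `z j` otherwise. -/
noncomputable def partialDep {d : ℕ} (μ : Fin d → Measure ℝ)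
    (f : (Fin d → ℝ) → ℝ) (u : Finset (Fin d)) (x : Fin d → ℝ) : ℝ :=
  ∫ z, f (fun j => if j ∈ u then x j else z j) ∂(Measure.pi μ)

/-- PDD component: `f_u = Σ_{v ⊆ u} (-1)^(|u|-|v|) F_v`. -/
noncomputable def pddComp {d : ℕ} (μ : Fin d → Measure ℝ)
    (f : (Fin d → ℝ) → ℝ) (u : Finset (Fin d)) (x : Fin d → ℝ) : ℝ :=
  ∑ v ∈ u.powerset, (-1 : ℝ) ^ (u.card - v.card) * partialDep μ f v x


/-- The value function `val_x(u) = ∫ f(x_u : z_{-u}) dμ(z) - ∫ f dμ` equals the sum of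
the nonempty PDD components: `Σ_{v ⊆ u, v ≠ ∅} f_v(x)`. -/
theorem valueFunction_eq_sum_pddComp {d : ℕ} (hd : 1 ≤ d)
    (μ : Fin d → Measure ℝ) [∀ i, IsProbabilityMeasure (μ i)]
    (f : (Fin d → ℝ) → ℝ) (hf : Measurable f) (C : ℝ) (hC : ∀ x, |f x| ≤ C)
    (x : Fin d → ℝ) (u : Finset (Fin d)) :
    partialDep μ f u x - ∫ z, f z ∂(Measure.pi μ) =
      ∑ v ∈ u.powerset.erase ∅, pddComp μ f v x := by
  rw [Finset.sum_erase_eq_sub (Finset.empty_mem_powerset u)]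
  have hsum : ∑ v ∈ u.powerset, pddComp μ f v x = partialDep μ f u x := by
    simp only [pddComp]
    exact aux_sum u (fun w => partialDep μ f w x)
  have h0 : pddComp μ f ∅ x = ∫ z, f z ∂(Measure.pi μ) := by
    simp [pddComp, partialDep]
  rw [hsum, h0]
end

section
/- (Annihilation property) Let d ≥ 1, let μ_j (j ∈ Fin d) be probability measures on ℝ, let μ := ⊗_j μ_j be their product measure on (Fin d → ℝ), and let f : (Fin d → ℝ) → ℝ be bounded and measurable. For u ⊆ Fin d define F_u(x) := ∫ f(x_u : z_{−u}) dμ(z) and f_u := Σ_{v ⊆ u} (−1)^{|u|−|v|} F_v. Then for every nonempty u ⊆ Fin d, every j ∈ u, and every x ∈ (Fin d → ℝ), integrating the j-th coordinate of the argument of f_u against μ_j gives zero: ∫ f_u(x with j-th coordinate replaced by t) dμ_j(t) = 0. -/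
open MeasureTheory Finset

/-- Pushing forward `μ j ⊗ π` by `(t, z) ↦ update z j t` recovers `π`. -/
lemma pi_map_update {d : ℕ} (μ : Fin d → Measure ℝ) [∀ i, IsProbabilityMeasure (μ i)]
    (j : Fin d) :
    Measure.map (fun p : ℝ × (Fin d → ℝ) => Function.update p.2 j p.1)
      ((μ j).prod (Measure.pi μ)) = Measure.pi μ := by
  have hmeas : Measurable (fun p : ℝ × (Fin d → ℝ) => Function.update p.2 j p.1) :=
    measurable_update'.comp (measurable_snd.prodMk measurable_fst)
  refine (Measure.pi_eq fun s hs => ?_).symm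
  rw [Measure.map_apply hmeas (MeasurableSet.univ_pi hs)]
  have hpre : (fun p : ℝ × (Fin d → ℝ) => Function.update p.2 j p.1) ⁻¹' Set.pi Set.univ s
      = s j ×ˢ Set.pi Set.univ (fun i => if i = j then Set.univ else s i) := by
    ext p
    simp only [Set.mem_preimage, Set.mem_pi, Set.mem_univ, true_implies, Set.mem_prod]
    constructor
    · intro h
      refine ⟨by simpa using h j, fun i => ?_⟩
      by_cases hij : i = j
      · simp [hij]
      · simpa [Function.update_apply, hij] using h i
    · rintro ⟨h1, h2⟩ i
      by_cases hij : i = j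
      · subst hij; simpa using h1
      · have := h2 i
        simpa [Function.update_apply, hij] using this
  rw [hpre, Measure.prod_prod, Measure.pi_pi]
  have h2 : ∏ i, (μ i) (if i = j then Set.univ else s i)
      = ∏ i ∈ Finset.univ.erase j, (μ i) (s i) := by
    rw [← Finset.prod_erase_mul _ _ (Finset.mem_univ j), if_pos rfl, measure_univ, mul_one]
    exact Finset.prod_congr rfl fun i hi => by simp [Finset.ne_of_mem_erase hi]
  rw [h2]
  exact Finset.mul_prod_erase Finset.univ (fun i => (μ i) (s i)) (Finset.mem_univ j)

lemma integral_update_pi {d : ℕ} (μ : Fin d → Measure ℝ)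
    [∀ i, IsProbabilityMeasure (μ i)] (j : Fin d)
    (h : (Fin d → ℝ) → ℝ) (hm : Measurable h) (C : ℝ) (hC : ∀ x, |h x| ≤ C) :
    ∫ t, ∫ z, h (Function.update z j t) ∂(Measure.pi μ) ∂(μ j)
      = ∫ z, h z ∂(Measure.pi μ) := by
  have hmeas : Measurable (fun p : ℝ × (Fin d → ℝ) => Function.update p.2 j p.1) :=
    measurable_update'.comp (measurable_snd.prodMk measurable_fst)
  have key := pi_map_update μ j
  have h1 : ∫ z, h z ∂(Measure.pi μ)
      = ∫ p : ℝ × (Fin d → ℝ), h (Function.update p.2 j p.1)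
          ∂((μ j).prod (Measure.pi μ)) := by
    conv_lhs => rw [← key]
    exact integral_map hmeas.aemeasurable hm.aestronglyMeasurable
  rw [h1]
  have hint : Integrable (fun p : ℝ × (Fin d → ℝ) => h (Function.update p.2 j p.1))
      ((μ j).prod (Measure.pi μ)) := by
    refine ⟨(hm.comp hmeas).aestronglyMeasurable, ?_⟩
    refine HasFiniteIntegral.of_bounded (C := C) (Filter.Eventually.of_forall fun p => ?_)
    simpa [Real.norm_eq_abs] using hC _
  rw [MeasureTheory.integral_prod _ hint]

lemma partialDep_abs_le {d : ℕ} (μ : Fin d → Measure ℝ)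
    [∀ i, IsProbabilityMeasure (μ i)] (f : (Fin d → ℝ) → ℝ) (C : ℝ)
    (hC : ∀ x, |f x| ≤ C) (v : Finset (Fin d)) (x : Fin d → ℝ) :
    |partialDep μ f v x| ≤ C := by
  have := norm_integral_le_of_norm_le_const (μ := Measure.pi μ)
    (f := fun z => f (fun i => if i ∈ v then x i else z i)) (C := C)
    (Filter.Eventually.of_forall fun z => by simpa [Real.norm_eq_abs] using hC _)
  simpa [partialDep, Real.norm_eq_abs, measure_univ] using this

lemma partialDep_measurable {d : ℕ} (μ : Fin d → Measure ℝ)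
    [∀ i, IsProbabilityMeasure (μ i)] (f : (Fin d → ℝ) → ℝ) (hf : Measurable f)
    (v : Finset (Fin d)) :
    StronglyMeasurable (partialDep μ f v) := by
  have hmeas : Measurable (fun p : (Fin d → ℝ) × (Fin d → ℝ) =>
      f (fun i => if i ∈ v then p.1 i else p.2 i)) := by
    apply hf.comp
    refine measurable_pi_lambda _ fun i => ?_
    by_cases hi : i ∈ v
    · simpa [hi] using (measurable_fst.eval (a := i))
    · simpa [hi] using (measurable_snd.eval (a := i))
  exact hmeas.stronglyMeasurable.integral_prod_right'

/-- Annihilation property: for nonempty `u` and `j ∈ u`, integrating the `j`-th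
coordinate of the argument of `f_u` against `μ j` gives zero. -/
theorem pddComp_integral_update_eq_zero {d : ℕ} (hd : 1 ≤ d)
    (μ : Fin d → Measure ℝ) [∀ i, IsProbabilityMeasure (μ i)]
    (f : (Fin d → ℝ) → ℝ) (hf : Measurable f) (C : ℝ) (hC : ∀ x, |f x| ≤ C)
    (u : Finset (Fin d)) (hu : u.Nonempty) (j : Fin d) (hj : j ∈ u)
    (x : Fin d → ℝ) :
    ∫ t, pddComp μ f u (Function.update x j t) ∂(μ j) = 0 := by
  -- integrability of each summand
  have hint : ∀ v : Finset (Fin d),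
      Integrable (fun t => partialDep μ f v (Function.update x j t)) (μ j) := by
    intro v
    refine ⟨((partialDep_measurable μ f hf v).comp_measurable
      (measurable_update x)).aestronglyMeasurable, ?_⟩
    refine HasFiniteIntegral.of_bounded (C := C) (Filter.Eventually.of_forall fun t => ?_)
    simpa [Real.norm_eq_abs] using partialDep_abs_le μ f C hC v _
  -- exchange sum and integral
  have hsum : ∫ t, pddComp μ f u (Function.update x j t) ∂(μ j)
      = ∑ v ∈ u.powerset, (-1 : ℝ) ^ (u.card - v.card)
          * ∫ t, partialDep μ f v (Function.update x j t) ∂(μ j) := by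
    simp only [pddComp]
    rw [integral_finset_sum _ fun v _ => ((hint v).const_mul _)]
    exact Finset.sum_congr rfl fun v _ => integral_const_mul _ _
  rw [hsum]
  -- value of each inner integral
  have hval : ∀ v ∈ u.powerset,
      ∫ t, partialDep μ f v (Function.update x j t) ∂(μ j)
        = partialDep μ f (v.erase j) x := by
    intro v hv
    by_cases hjv : j ∈ v
    · -- Fubini case
      have hrw : ∀ t, partialDep μ f v (Function.update x j t)
          = ∫ z, (fun w => f (fun i => if i ∈ v.erase j then x i else w i))
              (Function.update z j t) ∂(Measure.pi μ) := by
        intro t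
        unfold partialDep
        congr 1
        funext z
        congr 1
        funext i
        by_cases hij : i = j
        · subst hij; simp [hjv]
        · by_cases hiv : i ∈ v <;>
            simp [Function.update_apply, hij, hiv, Finset.mem_erase]
      simp_rw [hrw]
      have hm : Measurable (fun w : Fin d → ℝ =>
          f (fun i => if i ∈ v.erase j then x i else w i)) := by
        apply hf.comp
        refine measurable_pi_lambda _ fun i => ?_
        by_cases hi : i ∈ v.erase j
        · simp [hi]
        · simpa [hi] using (measurable_pi_apply i)
      rw [integral_update_pi μ j _ hm C (fun w => hC _)]
      rfl
    · -- constant case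
      have hrw : ∀ t, partialDep μ f v (Function.update x j t) = partialDep μ f v x := by
        intro t
        unfold partialDep
        congr 1
        funext z
        congr 1
        funext i
        by_cases hiv : i ∈ v
        · have : i ≠ j := fun h => hjv (h ▸ hiv)
          simp [hiv, Function.update_apply, this]
        · simp [hiv]
      simp_rw [hrw]
      rw [Finset.erase_eq_of_notMem hjv]
      simp [integral_const, measure_univ]
  rw [Finset.sum_congr rfl fun v hv => by rw [hval v hv]]
  -- telescoping cancellation
  have hju : j ∉ u.erase j := Finset.notMem_erase j u
  have hu' : u = insert j (u.erase j) := (Finset.insert_erase hj).symm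
  rw [hu', Finset.sum_powerset_insert hju]
  rw [← Finset.sum_add_distrib]
  apply Finset.sum_eq_zero
  intro w hw
  have hjw : j ∉ w := fun h => hju (Finset.mem_powerset.mp hw h)
  have hcard : (insert j (u.erase j)).card = (u.erase j).card + 1 :=
    Finset.card_insert_of_notMem hju
  have hwcard : w.card ≤ (u.erase j).card :=
    Finset.card_le_card (Finset.mem_powerset.mp hw)
  have hcard2 : (insert j w).card = w.card + 1 := Finset.card_insert_of_notMem hjw
  rw [Finset.erase_eq_of_notMem hjw, Finset.erase_insert hjw, hcard, hcard2]
  have hsub : (u.erase j).card + 1 - w.card = ((u.erase j).card - w.card) + 1 := by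
    omega
  have hsub2 : (u.erase j).card + 1 - (w.card + 1) = (u.erase j).card - w.card := by
    omega
  rw [hsub, hsub2, pow_succ]
  ring
end

section
/- (Orthogonality of PDD components) Let d ≥ 1, let μ_j (j ∈ Fin d) be probability measures on ℝ, let μ := ⊗_j μ_j be their product measure on (Fin d → ℝ), and let f : (Fin d → ℝ) → ℝ be bounded and measurable. For u ⊆ Fin d define F_u(x) := ∫ f(x_u : z_{−u}) dμ(z) and f_u := Σ_{v ⊆ u} (−1)^{|u|−|v|} F_v. Then for all u, v ⊆ Fin d with u ≠ v, ∫ f_u(x) · f_v(x) dμ(x) = 0. -/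
open MeasureTheory Finset

/-! Replacing the coordinate `x_j` of a `μ`-distributed point by an independent `μ_j`-distributed
value leaves the law `μ` unchanged, so by Fubini any integral against `μ` may first average over
`x_j`. This average sends `F_v` to `F_{v \ {j}}`; in the alternating sum defining `f_u` with
`j ∈ u` the terms for `w` and `insert j w` then cancel, so `f_u` averages to zero in every
coordinate of `u`. If `j ∈ u \ v`, the factor `f_v` does not depend on `x_j`, and averaging
`f_u f_v` over `x_j` first gives `0`. -/

open Function

section UpdateCoordinate

variable {ι : Type*} [Fintype ι] [DecidableEq ι] {α : ι → Type*}
  [∀ i, MeasurableSpace (α i)] (μ : ∀ i, Measure (α i)) [∀ i, SigmaFinite (μ i)]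
  (j : ι) [IsProbabilityMeasure (μ j)]

theorem measurePreserving_update_prod :
    MeasurePreserving (fun p : (∀ i, α i) × α j => update p.1 j p.2)
      ((Measure.pi μ).prod (μ j)) (Measure.pi μ) := by
  refine ⟨measurable_update', (Measure.pi_eq fun s hs => ?_).symm⟩
  have hpre : (fun p : (∀ i, α i) × α j => update p.1 j p.2) ⁻¹' Set.univ.pi s
      = Set.univ.pi (update s j Set.univ) ×ˢ s j := by
    ext ⟨x, t⟩
    simp only [Set.mem_preimage, Set.mem_prod, Set.mem_univ_pi]
    grind
  have hprod : ∏ i, μ i (update s j Set.univ i) = ∏ i ∈ univ.erase j, μ i (s i) := by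
    rw [← prod_erase_mul _ _ (mem_univ j), update_self, measure_univ, mul_one]
    exact prod_congr rfl fun i hi => by rw [update_of_ne (ne_of_mem_erase hi)]
  rw [Measure.map_apply measurable_update' (.univ_pi hs), hpre, Measure.prod_prod, Measure.pi_pi,
    hprod, prod_erase_mul _ _ (mem_univ j)]

variable {E : Type*} [NormedAddCommGroup E] [NormedSpace ℝ E] {g : (∀ i, α i) → E}

theorem integral_eq_integral_prod_update (hg : Integrable g (Measure.pi μ)) :
    ∫ x, g x ∂Measure.pi μ = ∫ p, g (update p.1 j p.2) ∂(Measure.pi μ).prod (μ j) := by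
  have hp := measurePreserving_update_prod μ j
  rw [← integral_map hp.measurable.aemeasurable (by rw [hp.map_eq]; exact hg.1), hp.map_eq]

theorem integral_eq_integral_integral_update (hg : Integrable g (Measure.pi μ)) :
    ∫ x, g x ∂Measure.pi μ = ∫ x, ∫ t, g (update x j t) ∂μ j ∂Measure.pi μ := by
  rw [integral_eq_integral_prod_update μ j hg]
  exact integral_prod _ ((measurePreserving_update_prod μ j).integrable_comp_of_integrable hg)

theorem integral_eq_integral_integral_update_swap (hg : Integrable g (Measure.pi μ)) :
    ∫ x, g x ∂Measure.pi μ = ∫ t, ∫ x, g (update x j t) ∂Measure.pi μ ∂μ j := by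
  rw [integral_eq_integral_prod_update μ j hg]
  exact integral_prod_symm _ ((measurePreserving_update_prod μ j).integrable_comp_of_integrable hg)

end UpdateCoordinate

theorem Finset.sum_powerset_neg_one_pow_mul_erase {ι R : Type*} [DecidableEq ι] [CommRing R]
    {u : Finset ι} {j : ι} (hj : j ∈ u) (g : Finset ι → R) :
    ∑ v ∈ u.powerset, (-1 : R) ^ (u.card - v.card) * g (v.erase j) = 0 := by
  rw [← insert_erase hj, sum_powerset_insert (notMem_erase j u), ← sum_add_distrib]
  refine sum_eq_zero fun v hv => ?_
  have hjv : j ∉ v := fun h => notMem_erase j u (mem_powerset.mp hv h)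
  have hcard : v.card ≤ (u.erase j).card := card_le_card (mem_powerset.mp hv)
  rw [card_insert_of_notMem (notMem_erase j u), card_insert_of_notMem hjv, erase_insert hjv,
    erase_eq_of_notMem hjv, Nat.add_sub_add_right, Nat.sub_add_comm hcard, pow_succ]
  ring

theorem measurable_hybrid {ι β : Type*} [DecidableEq ι] [MeasurableSpace β] (v : Finset ι) :
    Measurable fun p : (ι → β) × (ι → β) => fun i => if i ∈ v then p.1 i else p.2 i :=
  measurable_pi_lambda _ fun i => by
    by_cases hi : i ∈ v <;> simp only [hi, if_true, if_false] <;> fun_prop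

section PartialDependence

variable {d : ℕ} {μ : Fin d → Measure ℝ} {f : (Fin d → ℝ) → ℝ}

theorem partialDep_update_of_notMem {j : Fin d} {v : Finset (Fin d)} (hj : j ∉ v)
    (x : Fin d → ℝ) (t : ℝ) :
    partialDep μ f v (update x j t) = partialDep μ f v x := by
  refine integral_congr_ae (ae_of_all _ fun z => congrArg f (funext fun i => ?_))
  split_ifs with hi
  · exact update_of_ne (ne_of_mem_of_not_mem hi hj) t x
  · rfl

theorem pddComp_update_of_notMem {j : Fin d} {u : Finset (Fin d)} (hj : j ∉ u)
    (x : Fin d → ℝ) (t : ℝ) :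
    pddComp μ f u (update x j t) = pddComp μ f u x :=
  sum_congr rfl fun v hv =>
    by rw [partialDep_update_of_notMem fun h => hj (mem_powerset.mp hv h)]

variable [∀ i, IsProbabilityMeasure (μ i)] {C : ℝ}

theorem measurable_partialDep (hf : Measurable f) (v : Finset (Fin d)) :
    Measurable (partialDep μ f v) :=
  (hf.comp (measurable_hybrid v)).stronglyMeasurable.integral_prod_right'.measurable

theorem abs_partialDep_le (hC : ∀ x, |f x| ≤ C) (v : Finset (Fin d)) (x : Fin d → ℝ) :
    |partialDep μ f v x| ≤ C := by
  simpa [partialDep] using norm_integral_le_of_norm_le_const (μ := Measure.pi μ)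
    (f := fun z => f fun j => if j ∈ v then x j else z j)
    (ae_of_all _ fun z => hC fun j => if j ∈ v then x j else z j)

theorem measurable_pddComp (hf : Measurable f) (u : Finset (Fin d)) :
    Measurable (pddComp μ f u) :=
  Finset.measurable_fun_sum _ fun v _ => (measurable_partialDep hf v).const_mul _

theorem abs_pddComp_le (hC : ∀ x, |f x| ≤ C) (u : Finset (Fin d)) (x : Fin d → ℝ) :
    |pddComp μ f u x| ≤ 2 ^ u.card * C :=
  calc |pddComp μ f u x| ≤ ∑ v ∈ u.powerset, |partialDep μ f v x| :=
        (abs_sum_le_sum_abs _ _).trans_eq (sum_congr rfl fun v _ => by simp [abs_mul])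
    _ ≤ ∑ _v ∈ u.powerset, C := sum_le_sum fun v _ => abs_partialDep_le hC v x
    _ = 2 ^ u.card * C := by simp [card_powerset]

theorem integral_partialDep_update (hf : Measurable f) (hC : ∀ x, |f x| ≤ C) (j : Fin d)
    (v : Finset (Fin d)) (x : Fin d → ℝ) :
    ∫ t, partialDep μ f v (update x j t) ∂μ j = partialDep μ f (v.erase j) x := by
  by_cases hj : j ∈ v
  · set g : (Fin d → ℝ) → ℝ := fun z => f fun i => if i ∈ v.erase j then x i else z i
    have hg : Integrable g (Measure.pi μ) :=
      .of_bound (hf.comp ((measurable_hybrid _).comp measurable_prodMk_left)).aestronglyMeasurable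
        C (ae_of_all _ fun z => hC _)
    change _ = ∫ z, g z ∂Measure.pi μ
    -- as `j ∈ v`, the hybrid `((update x j t)_v : z_{-v})` is
    -- `(x_{v \ {j}} : (update z j t)_{-(v \ {j})})`
    rw [integral_eq_integral_integral_update_swap μ j hg]
    refine integral_congr_ae (ae_of_all _ fun t => integral_congr_ae (ae_of_all _ fun z =>
      congrArg f (funext fun i => ?_)))
    simp only [mem_erase, update_apply]
    grind
  · simp [partialDep_update_of_notMem hj, erase_eq_of_notMem hj]

theorem integral_pddComp_update_of_mem (hf : Measurable f) (hC : ∀ x, |f x| ≤ C) {j : Fin d}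
    {u : Finset (Fin d)} (hj : j ∈ u) (x : Fin d → ℝ) :
    ∫ t, pddComp μ f u (update x j t) ∂μ j = 0 := by
  have hint (v : Finset (Fin d)) :
      Integrable (fun t => partialDep μ f v (update x j t)) (μ j) :=
    .of_bound ((measurable_partialDep hf v).comp (measurable_update x)).aestronglyMeasurable C
      (ae_of_all _ fun t => abs_partialDep_le hC v _)
  simp only [pddComp]
  rw [integral_finsetSum _ fun v _ => (hint v).const_mul _]
  simp only [integral_const_mul, integral_partialDep_update hf hC]
  exact sum_powerset_neg_one_pow_mul_erase hj fun w => partialDep μ f w x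

theorem integral_pddComp_mul_pddComp_of_mem_of_notMem (hf : Measurable f) (hC : ∀ x, |f x| ≤ C)
    {j : Fin d} {u v : Finset (Fin d)} (hju : j ∈ u) (hjv : j ∉ v) :
    ∫ x, pddComp μ f u x * pddComp μ f v x ∂Measure.pi μ = 0 := by
  have hint : Integrable (fun x => pddComp μ f u x * pddComp μ f v x) (Measure.pi μ) :=
    .bdd_mul (.of_bound (measurable_pddComp hf v).aestronglyMeasurable _
      (ae_of_all _ (abs_pddComp_le hC v))) (measurable_pddComp hf u).aestronglyMeasurable
      (ae_of_all _ (abs_pddComp_le hC u))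
  rw [integral_eq_integral_integral_update μ j hint]
  simp only [pddComp_update_of_notMem hjv, integral_mul_const,
    integral_pddComp_update_of_mem hf hC hju, zero_mul, integral_zero]

end PartialDependence

theorem pddComp_orthogonal_general {d : ℕ}
    (μ : Fin d → Measure ℝ) [∀ i, IsProbabilityMeasure (μ i)]
    (f : (Fin d → ℝ) → ℝ) (hf : Measurable f) (C : ℝ) (hC : ∀ x, |f x| ≤ C)
    (u v : Finset (Fin d)) (huv : u ≠ v) :
    ∫ x, pddComp μ f u x * pddComp μ f v x ∂(Measure.pi μ) = 0 := by
  by_cases huv' : u ⊆ v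
  · obtain ⟨j, hjv, hju⟩ := not_subset.mp fun hvu => huv (huv'.antisymm hvu)
    simpa only [mul_comm] using integral_pddComp_mul_pddComp_of_mem_of_notMem hf hC hjv hju
  · obtain ⟨j, hju, hjv⟩ := not_subset.mp huv'
    exact integral_pddComp_mul_pddComp_of_mem_of_notMem hf hC hju hjv

/-- Orthogonality of PDD components: for `u ≠ v`, `∫ f_u(x) f_v(x) dμ(x) = 0`. -/
theorem pddComp_orthogonal {d : ℕ} (hd : 1 ≤ d)
    (μ : Fin d → Measure ℝ) [∀ i, IsProbabilityMeasure (μ i)]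
    (f : (Fin d → ℝ) → ℝ) (hf : Measurable f) (C : ℝ) (hC : ∀ x, |f x| ≤ C)
    (u v : Finset (Fin d)) (huv : u ≠ v) :
    ∫ x, pddComp μ f u x * pddComp μ f v x ∂(Measure.pi μ) = 0 :=
  pddComp_orthogonal_general μ f hf C hC u v huv
end
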